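/- arXiv:0708.2739 — 5 statements merged into one kernel-verified Lean document; each statement's English description precedes it below -/
import Mathlib

section
/- With λ, μ_1, μ_2, r and v as in the previous construction, and for n ≥ 1 let Z_n ~ geom_n(μ_1/μ_2) (P(Z_n = j) ∝ (μ_1/μ_2)^j on {0,...,n}). Then λ(n) - μ_2 (v(n) - v(n-1)) = (E[λ(Z_n)] - μ_2 (1 - r/μ_1) P(Z_n > 0)) / P(Z_n = n). -/
/-!
Write `q = μ₁/μ₂`. The increment `v(n) - v(n-1)` is the inner sum
`∑_{k<n} (1 - (λ(k)+r)/μ₁) q^{-(n-1-k)}`; multiplying it by `μ₂ qⁿ` turns the `k`-th term into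
`μ₂ (1 - r/μ₁) q^{k+1} - λ(k) q^k`, because `μ₂ q = μ₁`. Hence
`qⁿ (λ(n) - μ₂ (v(n) - v(n-1))) = ∑_{j≤n} λ(j) q^j - μ₂ (1 - r/μ₁) ∑_{1≤j≤n} q^j`,
and dividing by the normalising constant `∑_{j≤n} q^j` of `geomₙ(q)` gives the identity.
-/

open Finset

theorem sub_pred_of_eq_sum_sum_pow {R : Type*} [CommRing R] (c : ℕ → R) (p : R) (v : ℕ → R)
    (hv : ∀ n, v n = ∑ j ∈ range n, ∑ k ∈ range (j + 1), c k * p ^ (j - k)) (n : ℕ) :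
    v n - v (n - 1) = ∑ k ∈ range n, c k * p ^ (n - 1 - k) := by
  cases n with
  | zero => simp
  | succ n => simp [hv, sum_range_succ]

theorem pow_mul_sum_range_mul_inv_pow {K : Type*} [Field K] {q : K} (hq : q ≠ 0)
    (a : ℕ → K) (n : ℕ) :
    q ^ n * ∑ k ∈ range n, a k * q⁻¹ ^ (n - 1 - k) = ∑ k ∈ range n, a k * q ^ (k + 1) := by
  rw [mul_sum]
  refine sum_congr rfl fun k hk => ?_
  have hn : n = (n - 1 - k) + (k + 1) := by have := mem_range.mp hk; omega
  rw [hn, pow_add, ← hn, inv_pow]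
  field_simp

theorem pow_mul_boundary_drift (lam : ℕ → ℝ) {mu1 mu2 : ℝ} (hmu1 : mu1 ≠ 0) (hmu2 : mu2 ≠ 0)
    (r : ℝ) (v : ℕ → ℝ)
    (hv : ∀ n, v n =
      ∑ j ∈ range n, ∑ k ∈ range (j + 1), (1 - (lam k + r) / mu1) * (mu2 / mu1) ^ (j - k))
    (n : ℕ) :
    (mu1 / mu2) ^ n * (lam n - mu2 * (v n - v (n - 1))) =
      ∑ j ∈ range (n + 1), lam j * (mu1 / mu2) ^ j -
        mu2 * (1 - r / mu1) * (∑ j ∈ range (n + 1), (mu1 / mu2) ^ j - 1) := by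
  have hq : mu1 / mu2 ≠ 0 := div_ne_zero hmu1 hmu2
  have hincr : (mu1 / mu2) ^ n * (v n - v (n - 1)) =
      ∑ k ∈ range n, (1 - (lam k + r) / mu1) * (mu1 / mu2) ^ (k + 1) := by
    rw [sub_pred_of_eq_sum_sum_pow _ _ v hv, ← inv_div mu1 mu2,
      pow_mul_sum_range_mul_inv_pow hq]
  have hterm : ∀ k, mu2 * ((1 - (lam k + r) / mu1) * (mu1 / mu2) ^ (k + 1)) =
      mu2 * (1 - r / mu1) * (mu1 / mu2) ^ (k + 1) - lam k * (mu1 / mu2) ^ k := by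
    intro k
    rw [pow_succ]
    field_simp
    ring
  have hdrift : (mu1 / mu2) ^ n * (mu2 * (v n - v (n - 1))) =
      mu2 * (1 - r / mu1) * ∑ k ∈ range n, (mu1 / mu2) ^ (k + 1) -
        ∑ k ∈ range n, lam k * (mu1 / mu2) ^ k := by
    rw [mul_left_comm, hincr, mul_sum, sum_congr rfl fun k _ => hterm k, sum_sub_distrib, mul_sum]
  rw [sum_range_succ, sum_range_succ', pow_zero, add_sub_cancel_right, mul_sub, hdrift]
  ring

theorem stmt_5_general (lam : ℕ → ℝ) (mu1 mu2 r : ℝ)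
    (hmu1 : 0 < mu1) (hmu2 : 0 < mu2)
    (v : ℕ → ℝ)
    (hv : ∀ n, v n =
      ∑ j ∈ range n, ∑ k ∈ range (j + 1),
        (1 - (lam k + r) / mu1) * (mu2 / mu1) ^ (j - k))
    (n : ℕ) :
    lam n - mu2 * (v n - v (n - 1)) =
      ((∑ j ∈ range (n + 1), lam j * (mu1 / mu2) ^ j) /
          (∑ j ∈ range (n + 1), (mu1 / mu2) ^ j) -
        mu2 * (1 - r / mu1) *
          ((∑ j ∈ range (n + 1), (mu1 / mu2) ^ j - 1) /
            (∑ j ∈ range (n + 1), (mu1 / mu2) ^ j))) /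
      ((mu1 / mu2) ^ n / (∑ j ∈ range (n + 1), (mu1 / mu2) ^ j)) := by
  have hq : 0 < mu1 / mu2 := div_pos hmu1 hmu2
  have hS : 0 < ∑ j ∈ range (n + 1), (mu1 / mu2) ^ j :=
    sum_pos (fun j _ => pow_pos hq j) nonempty_range_add_one
  rw [← mul_div_assoc, ← sub_div, div_div_div_cancel_right₀ hS.ne',
    ← pow_mul_boundary_drift lam hmu1.ne' hmu2.ne' r v hv n,
    mul_div_cancel_left₀ _ (pow_pos hq n).ne']

/-- Boundary drift identity: `λ(n) - μ₂(v(n)-v(n-1))` equals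
`(E[λ(Zₙ)] - μ₂(1-r/μ₁) P(Zₙ>0)) / P(Zₙ=n)` with `Zₙ ~ geomₙ(μ₁/μ₂)`. -/
theorem stmt_5 (lam : ℕ → ℝ) (hlam : ∀ n, 0 ≤ lam n) (mu1 mu2 r : ℝ)
    (hmu1 : 0 < mu1) (hmu2 : 0 < mu2) (hr : 0 < r)
    (v : ℕ → ℝ)
    (hv : ∀ n, v n =
      ∑ j ∈ range n, ∑ k ∈ range (j + 1),
        (1 - (lam k + r) / mu1) * (mu2 / mu1) ^ (j - k))
    (n : ℕ) (hn : 1 ≤ n) :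
    lam n - mu2 * (v n - v (n - 1)) =
      ((∑ j ∈ range (n + 1), lam j * (mu1 / mu2) ^ j) /
          (∑ j ∈ range (n + 1), (mu1 / mu2) ^ j) -
        mu2 * (1 - r / mu1) *
          ((∑ j ∈ range (n + 1), (mu1 / mu2) ^ j - 1) /
            (∑ j ∈ range (n + 1), (mu1 / mu2) ^ j))) /
      ((mu1 / mu2) ^ n / (∑ j ∈ range (n + 1), (mu1 / mu2) ^ j)) :=
  stmt_5_general lam mu1 mu2 r hmu1 hmu2 v hv n
end

section
/- Let λ: Z_+ → [0,∞) be a nonincreasing bounded sequence. Define f: (0,1) → R by f(x) = (1-x) ∑_{n=0}^∞ λ(n) x^n. Then f is nonincreasing on (0,1); in particular, its derivative f'(x) = ∑_{n=0}^∞ (n+1)(λ(n+1) - λ(n)) x^n ≤ 0 for all x ∈ (0,1). -/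
/-!
Summation by parts gives `(1 - x) ∑ λ(n) xⁿ = λ(0) + ∑ (λ(n+1) - λ(n)) xⁿ⁺¹` on the unit disc.
The right-hand side is a power series with bounded coefficients, so it may be differentiated
termwise there; its derivative `∑ (n+1)(λ(n+1) - λ(n)) xⁿ` has nonpositive terms for
`x ∈ (0,1)` because `λ` is nonincreasing, and the mean value theorem makes `f` nonincreasing.
-/

open Topology

theorem one_sub_mul_tsum_mul_pow {R : Type*} [CommRing R] [TopologicalSpace R]
    [IsTopologicalRing R] [T2Space R] {a : ℕ → R} {x : R} (ha : Summable fun n => a n * x ^ n) :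
    (1 - x) * ∑' n, a n * x ^ n = a 0 + ∑' n, (a (n + 1) - a n) * x ^ (n + 1) := by
  have hshift : Summable fun n => a (n + 1) * x ^ (n + 1) := (summable_nat_add_iff 1).2 ha
  have hmul : Summable fun n => a n * x ^ (n + 1) :=
    (ha.mul_left x).congr fun n => by ring
  have hmul_tsum : x * ∑' n, a n * x ^ n = ∑' n, a n * x ^ (n + 1) := by
    rw [← ha.tsum_mul_left]
    exact tsum_congr fun n => by ring
  calc (1 - x) * ∑' n, a n * x ^ n = ∑' n, a n * x ^ n - x * ∑' n, a n * x ^ n := by ring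
    _ = a 0 + (∑' n, a (n + 1) * x ^ (n + 1) - ∑' n, a n * x ^ (n + 1)) := by
      rw [hmul_tsum, ha.tsum_eq_zero_add]; simp only [pow_zero, mul_one]; ring
    _ = a 0 + ∑' n, (a (n + 1) - a n) * x ^ (n + 1) := by
      rw [← hshift.tsum_sub hmul]
      simp only [sub_mul]

theorem summable_mul_pow_of_norm_le {𝕜 : Type*} [NormedField 𝕜] [CompleteSpace 𝕜] {a : ℕ → 𝕜}
    {C : ℝ} (ha : ∀ n, ‖a n‖ ≤ C) {x : 𝕜} (hx : ‖x‖ < 1) : Summable fun n => a n * x ^ n :=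
  .of_norm_bounded ((summable_geometric_of_lt_one (norm_nonneg x) hx).mul_left C) fun n => by
    rw [norm_mul, norm_pow]
    exact mul_le_mul_of_nonneg_right (ha n) (by positivity)

theorem hasDerivAt_tsum_mul_pow_succ {𝕜 : Type*} [RCLike 𝕜] {b : ℕ → 𝕜} {C : ℝ}
    (hb : ∀ n, ‖b n‖ ≤ C) {x : 𝕜} (hx : ‖x‖ < 1) :
    HasDerivAt (fun y => ∑' n, b n * y ^ (n + 1)) (∑' n : ℕ, (n + 1 : 𝕜) * b n * x ^ n) x := by
  obtain ⟨r, hxr, hr1⟩ := exists_between hx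
  have hr0 : 0 ≤ r := (norm_nonneg x).trans hxr.le
  have hr : ‖r‖ < 1 := by rwa [Real.norm_of_nonneg hr0]
  have hC : 0 ≤ C := (norm_nonneg _).trans (hb 0)
  have hbound : Summable fun n : ℕ => C * ((n + 1) * r ^ n) := by
    refine Summable.mul_left C ?_
    refine ((summable_pow_mul_geometric_of_norm_lt_one 1 hr).add
      (summable_geometric_of_lt_one hr0 hr1)).congr fun n => ?_
    ring
  refine hasDerivAt_tsum_of_isPreconnected hbound Metric.isOpen_ball
    (convex_ball 0 r).isPreconnected (g := fun n y => b n * y ^ (n + 1))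
    (g' := fun n y => (n + 1 : 𝕜) * b n * y ^ n) (y₀ := 0) (fun n y _ => ?_) (fun n y hy => ?_)
    (Metric.mem_ball_self ((norm_nonneg x).trans_lt hxr)) ?_
    (mem_ball_zero_iff.2 hxr)
  · exact ((hasDerivAt_pow (n + 1) y).const_mul (b n)).congr_deriv (by push_cast; ring)
  · rw [mem_ball_zero_iff] at hy
    have hn : ‖(n + 1 : 𝕜)‖ = n + 1 := by exact_mod_cast RCLike.norm_natCast (K := 𝕜) (n + 1)
    calc ‖(n + 1 : 𝕜) * b n * y ^ n‖ = (n + 1) * ‖b n‖ * ‖y‖ ^ n := by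
          rw [norm_mul, norm_mul, norm_pow, hn]
      _ ≤ (n + 1) * C * r ^ n := by gcongr; exact hb n
      _ = C * ((n + 1) * r ^ n) := by ring
  · simp

theorem hasDerivAt_one_sub_mul_tsum_mul_pow {𝕜 : Type*} [RCLike 𝕜] {a : ℕ → 𝕜} {C : ℝ}
    (ha : ∀ n, ‖a n‖ ≤ C) {x : 𝕜} (hx : ‖x‖ < 1) :
    HasDerivAt (fun y => (1 - y) * ∑' n : ℕ, a n * y ^ n)
      (∑' n : ℕ, (n + 1 : 𝕜) * (a (n + 1) - a n) * x ^ n) x := by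
  have hparts : (fun y => (1 - y) * ∑' n : ℕ, a n * y ^ n) =ᶠ[𝓝 x]
      fun y => a 0 + ∑' n : ℕ, (a (n + 1) - a n) * y ^ (n + 1) := by
    filter_upwards [Metric.isOpen_ball.mem_nhds (mem_ball_zero_iff.2 hx)] with y hy
    exact one_sub_mul_tsum_mul_pow (summable_mul_pow_of_norm_le ha (mem_ball_zero_iff.1 hy))
  have hstep : ∀ n, ‖a (n + 1) - a n‖ ≤ C + C := fun n =>
    (norm_sub_le _ _).trans (add_le_add (ha _) (ha n))
  exact ((hasDerivAt_tsum_mul_pow_succ hstep hx).const_add (a 0)).congr_of_eventuallyEq hparts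

theorem stmt_10_general (lam : ℕ → ℝ) (hnn : ∀ n, 0 ≤ lam n) (hanti : Antitone lam) :
    AntitoneOn (fun x : ℝ => (1 - x) * ∑' n : ℕ, lam n * x ^ n) (Set.Ioo 0 1) ∧
    ∀ x ∈ Set.Ioo (0 : ℝ) 1,
      HasDerivAt (fun x : ℝ => (1 - x) * ∑' n : ℕ, lam n * x ^ n)
        (∑' n : ℕ, (n + 1 : ℝ) * (lam (n + 1) - lam n) * x ^ n) x ∧
      (∑' n : ℕ, (n + 1 : ℝ) * (lam (n + 1) - lam n) * x ^ n) ≤ 0 := by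
  have hlam : ∀ n, ‖lam n‖ ≤ lam 0 := fun n => by
    rw [Real.norm_of_nonneg (hnn n)]; exact hanti n.zero_le
  have hderiv : ∀ x ∈ Set.Ioo (0 : ℝ) 1,
      HasDerivAt (fun x : ℝ => (1 - x) * ∑' n : ℕ, lam n * x ^ n)
        (∑' n : ℕ, (n + 1 : ℝ) * (lam (n + 1) - lam n) * x ^ n) x := fun x hx =>
    hasDerivAt_one_sub_mul_tsum_mul_pow hlam (by rw [Real.norm_of_nonneg hx.1.le]; exact hx.2)
  have hnonpos : ∀ x ∈ Set.Ioo (0 : ℝ) 1,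
      ∑' n : ℕ, (n + 1 : ℝ) * (lam (n + 1) - lam n) * x ^ n ≤ 0 := fun x hx =>
    tsum_nonpos fun n => mul_nonpos_of_nonpos_of_nonneg
      (mul_nonpos_of_nonneg_of_nonpos (by positivity) (sub_nonpos.2 (hanti n.le_succ)))
      (pow_nonneg hx.1.le n)
  refine ⟨antitoneOn_of_hasDerivWithinAt_nonpos (convex_Ioo 0 1)
    (f' := fun x => ∑' n : ℕ, (n + 1 : ℝ) * (lam (n + 1) - lam n) * x ^ n)
    (HasDerivAt.continuousOn hderiv) ?_ ?_, fun x hx => ⟨hderiv x hx, hnonpos x hx⟩⟩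
  all_goals rw [interior_Ioo]
  · exact fun x hx => (hderiv x hx).hasDerivWithinAt
  · exact hnonpos

/-- For nonincreasing bounded `λ ≥ 0`, the generating-function expectation
`f(x) = (1-x) ∑ λ(n) xⁿ` is nonincreasing on `(0,1)` with derivative
`∑ (n+1)(λ(n+1)-λ(n)) xⁿ ≤ 0`. -/
theorem stmt_10 (lam : ℕ → ℝ) (hnn : ∀ n, 0 ≤ lam n) (hanti : Antitone lam)
    (hbdd : ∃ C : ℝ, ∀ n, lam n ≤ C) :
    AntitoneOn (fun x : ℝ => (1 - x) * ∑' n : ℕ, lam n * x ^ n) (Set.Ioo 0 1) ∧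
    ∀ x ∈ Set.Ioo (0 : ℝ) 1,
      HasDerivAt (fun x : ℝ => (1 - x) * ∑' n : ℕ, lam n * x ^ n)
        (∑' n : ℕ, (n + 1 : ℝ) * (lam (n + 1) - lam n) * x ^ n) x ∧
      (∑' n : ℕ, (n + 1 : ℝ) * (lam (n + 1) - lam n) * x ^ n) ≤ 0 :=
  stmt_10_general lam hnn hanti
end

section
/- Let λ: Z_+ → [0,∞) be nonincreasing with λ(n) = 0 for all large n, and let 0 < μ_1 ≤ μ_1' with μ_1' < μ_2. If (1 - μ_1/μ_2) ∑_{n=0}^∞ λ(n)(μ_1/μ_2)^n < μ_1, then (1 - μ_1'/μ_2) ∑_{n=0}^∞ λ(n)(μ_1'/μ_2)^n < μ_1'. -/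
lemma abel_id_aux (lam : ℕ → ℝ) (r : ℝ) (M : ℕ) :
    (1 - r) * ∑ n ∈ Finset.range M, lam n * r ^ n
      = lam M * (1 - r ^ M)
        + ∑ m ∈ Finset.range M, (lam m - lam (m + 1)) * (1 - r ^ (m + 1)) := by
  induction M with
  | zero => simp
  | succ M ih =>
    rw [Finset.sum_range_succ, Finset.sum_range_succ, mul_add, ih]
    ring

lemma g_mono_aux (lam : ℕ → ℝ) (hnn : ∀ n, 0 ≤ lam n) (hanti : Antitone lam) (M : ℕ)
    (r r' : ℝ) (hr : 0 ≤ r) (hrr : r ≤ r') (hr1 : r' ≤ 1) :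
    (1 - r') * ∑ n ∈ Finset.range M, lam n * r' ^ n ≤
    (1 - r) * ∑ n ∈ Finset.range M, lam n * r ^ n := by
  rw [abel_id_aux, abel_id_aux]
  gcongr with m hm
  all_goals first
    | exact hnn M
    | exact sub_nonneg.2 (hanti (Nat.le_succ _))
    | exact pow_le_pow_left₀ hr hrr _

/-- The stability condition `E[λ(Z)] < μ₁`, `Z ~ geom(μ₁/μ₂)`, is preserved when
`μ₁` increases (for nonincreasing, eventually vanishing `λ`). -/
theorem stmt_11 (lam : ℕ → ℝ) (hnn : ∀ n, 0 ≤ lam n) (hanti : Antitone lam)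
    (hvan : ∃ n₀ : ℕ, ∀ n > n₀, lam n = 0)
    (mu1 mu1' mu2 : ℝ) (h1 : 0 < mu1) (h12 : mu1 ≤ mu1') (h2 : mu1' < mu2)
    (hstab : (1 - mu1 / mu2) * ∑' n : ℕ, lam n * (mu1 / mu2) ^ n < mu1) :
    (1 - mu1' / mu2) * ∑' n : ℕ, lam n * (mu1' / mu2) ^ n < mu1' := by
  obtain ⟨N, hN⟩ := hvan
  have hmu2 : 0 < mu2 := lt_trans (lt_of_lt_of_le h1 h12) h2
  have key : ∀ r : ℝ, ∑' n : ℕ, lam n * r ^ n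
      = ∑ n ∈ Finset.range (N + 1), lam n * r ^ n := by
    intro r
    refine tsum_eq_sum fun n hn => ?_
    rw [hN n (by simp at hn; omega), zero_mul]
  rw [key] at hstab ⊢
  have hr : 0 ≤ mu1 / mu2 := div_nonneg h1.le hmu2.le
  have hrr : mu1 / mu2 ≤ mu1' / mu2 := by gcongr
  have hr1 : mu1' / mu2 ≤ 1 := (div_le_one hmu2).2 h2.le
  calc (1 - mu1' / mu2) * ∑ n ∈ Finset.range (N + 1), lam n * (mu1' / mu2) ^ n
      ≤ (1 - mu1 / mu2) * ∑ n ∈ Finset.range (N + 1), lam n * (mu1 / mu2) ^ n :=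
        g_mono_aux lam hnn hanti _ _ _ hr hrr hr1
    _ < mu1 := hstab
    _ ≤ mu1' := h12
end

section
/- Let 0 < a < b, μ_1 ≥ μ_2 > 0, and λ(n) = a for n even, λ(n) = b for n odd. With Z_n ~ geom_n(μ_1/μ_2), one has liminf_n λ(n) = a and limsup_n E[λ(Z_n)] = (μ_1 b + μ_2 a)/(μ_1 + μ_2); in particular a < limsup_n E[λ(Z_n)]. -/
/-!
With `r = μ₁/μ₂`, the even–odd pair `j = 2i, 2i+1` contributes `(a + b r) r^{2i}` to the weighted
sum and `(1 + r) r^{2i}` to the normalising sum, so `E[λ(Z_n)] = (a + b r)/(1 + r)` exactly for odd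
`n`. For even `n` one more weight sits on the smaller value `a`, which only lowers the mean.
Hence the limsup is attained along the odd indices, and `(a + b r)/(1 + r) > a` since `b > a`.
-/

open Filter Finset

namespace Filter

variable {ι α : Type*} [ConditionallyCompleteLinearOrder α] {f : Filter ι} {u : ι → α} {c : α}

theorem limsup_eq_of_eventually_le_of_frequently_ge (hle : ∀ᶠ i in f, u i ≤ c)
    (hge : ∃ᶠ i in f, c ≤ u i) : limsup u f = c :=
  le_antisymm (limsup_le_of_le (IsCoboundedUnder.of_frequently_ge hge) hle)
    (le_limsup_of_frequently_le hge ⟨c, hle⟩)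

theorem liminf_eq_of_eventually_ge_of_frequently_le (hge : ∀ᶠ i in f, c ≤ u i)
    (hle : ∃ᶠ i in f, u i ≤ c) : liminf u f = c :=
  limsup_eq_of_eventually_le_of_frequently_ge (α := αᵒᵈ) hge hle

end Filter

def alternating {α : Type*} (a b : α) (n : ℕ) : α := if Even n then a else b

section Alternating

variable {α : Type*} (a b : α)

@[simp] theorem alternating_two_mul (m : ℕ) : alternating a b (2 * m) = a :=
  if_pos (even_two_mul m)

@[simp] theorem alternating_two_mul_add_one (m : ℕ) : alternating a b (2 * m + 1) = b :=
  if_neg (Nat.not_even_iff_odd.mpr (odd_two_mul_add_one m))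

theorem liminf_alternating {a b : ℝ} (hab : a ≤ b) : liminf (alternating a b) atTop = a := by
  refine liminf_eq_of_eventually_ge_of_frequently_le (Eventually.of_forall fun n => ?_) ?_
  · unfold alternating; split_ifs <;> linarith
  · exact frequently_atTop.mpr fun N => ⟨2 * N, by omega, (alternating_two_mul a b N).le⟩

theorem mul_sum_range_two_mul_alternating {R : Type*} [CommRing R] (a b r : R) (m : ℕ) :
    (1 + r) * ∑ j ∈ range (2 * m), alternating a b j * r ^ j
      = (a + b * r) * ∑ j ∈ range (2 * m), r ^ j := by
  induction m with
  | zero => simp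
  | succ m ih =>
    rw [show 2 * (m + 1) = 2 * m + 1 + 1 by ring]
    simp only [sum_range_succ, alternating_two_mul, alternating_two_mul_add_one]
    linear_combination ih

end Alternating

/-- `E[f(Z_n)]` for `Z_n` on `{0, …, n}` with `P(Z_n = j) ∝ r ^ j`. -/
noncomputable def truncGeomMean (f : ℕ → ℝ) (r : ℝ) (n : ℕ) : ℝ :=
  (∑ j ∈ range (n + 1), f j * r ^ j) / ∑ j ∈ range (n + 1), r ^ j

section TruncGeomMean

variable {a b r : ℝ}

theorem sum_range_pow_pos (hr : 0 < r) (n : ℕ) : 0 < ∑ j ∈ range (n + 1), r ^ j :=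
  sum_pos (fun j _ => pow_pos hr j) nonempty_range_add_one

theorem truncGeomMean_alternating_two_mul_add_one (hr : 0 < r) (m : ℕ) :
    truncGeomMean (alternating a b) r (2 * m + 1) = (a + b * r) / (1 + r) := by
  have hS := sum_range_pow_pos hr (2 * m + 1)
  rw [truncGeomMean, div_eq_div_iff hS.ne' (by positivity)]
  linear_combination mul_sum_range_two_mul_alternating a b r (m + 1)

theorem truncGeomMean_alternating_le (hab : a ≤ b) (hr : 0 < r) (n : ℕ) :
    truncGeomMean (alternating a b) r n ≤ (a + b * r) / (1 + r) := by
  obtain ⟨m, rfl | rfl⟩ := Nat.even_or_odd' n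
  · have hS := sum_range_pow_pos hr (2 * m)
    rw [truncGeomMean, div_le_div_iff₀ hS (by positivity), sum_range_succ, sum_range_succ,
      alternating_two_mul]
    have hpair := mul_sum_range_two_mul_alternating a b r m
    have hlast : a * r ^ (2 * m) * r ≤ b * r ^ (2 * m) * r := by gcongr
    linear_combination hpair + hlast
  · exact (truncGeomMean_alternating_two_mul_add_one hr m).le

theorem limsup_truncGeomMean_alternating (hab : a ≤ b) (hr : 0 < r) :
    limsup (truncGeomMean (alternating a b) r) atTop = (a + b * r) / (1 + r) :=
  limsup_eq_of_eventually_le_of_frequently_ge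
    (Eventually.of_forall (truncGeomMean_alternating_le hab hr))
    (frequently_atTop.mpr fun N =>
      ⟨2 * N + 1, by omega, (truncGeomMean_alternating_two_mul_add_one hr N).ge⟩)

end TruncGeomMean

theorem stmt_17_general (a b mu1 mu2 : ℝ) (hab : a < b)
    (hmu2 : 0 < mu2) (hmu : mu2 ≤ mu1)
    (lam : ℕ → ℝ) (hlam : ∀ n, lam n = if Even n then a else b) :
    liminf lam atTop = a ∧
    limsup (fun n =>
        (∑ j ∈ range (n + 1), lam j * (mu1 / mu2) ^ j) /
          (∑ j ∈ range (n + 1), (mu1 / mu2) ^ j)) atTop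
      = (mu1 * b + mu2 * a) / (mu1 + mu2) ∧
    a < limsup (fun n =>
        (∑ j ∈ range (n + 1), lam j * (mu1 / mu2) ^ j) /
          (∑ j ∈ range (n + 1), (mu1 / mu2) ^ j)) atTop := by
  obtain rfl : lam = alternating a b := funext hlam
  have hr : 0 < mu1 / mu2 := div_pos (hmu2.trans_le hmu) hmu2
  have hlimsup := limsup_truncGeomMean_alternating hab.le hr
  have hmean : (a + b * (mu1 / mu2)) / (1 + mu1 / mu2) = (mu1 * b + mu2 * a) / (mu1 + mu2) := by
    field_simp
    ring
  have hgap : a < (a + b * (mu1 / mu2)) / (1 + mu1 / mu2) := by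
    rw [lt_div_iff₀ (by positivity)]
    nlinarith
  exact ⟨liminf_alternating hab.le, hlimsup.trans hmean, hlimsup ▸ hgap⟩

/-- Alternating input rates `λ = a, b, a, b, …` with `μ₁ ≥ μ₂`: `liminf λ = a` while
`limsup E[λ(Zₙ)] = (μ₁ b + μ₂ a)/(μ₁ + μ₂) > a`. -/
theorem stmt_17 (a b mu1 mu2 : ℝ) (ha : 0 < a) (hab : a < b)
    (hmu2 : 0 < mu2) (hmu : mu2 ≤ mu1)
    (lam : ℕ → ℝ) (hlam : ∀ n, lam n = if Even n then a else b) :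
    liminf lam atTop = a ∧
    limsup (fun n =>
        (∑ j ∈ range (n + 1), lam j * (mu1 / mu2) ^ j) /
          (∑ j ∈ range (n + 1), (mu1 / mu2) ^ j)) atTop
      = (mu1 * b + mu2 * a) / (mu1 + mu2) ∧
    a < limsup (fun n =>
        (∑ j ∈ range (n + 1), lam j * (mu1 / mu2) ^ j) /
          (∑ j ∈ range (n + 1), (mu1 / mu2) ^ j)) atTop :=
  stmt_17_general a b mu1 mu2 hab hmu2 hmu lam hlam
end

section
/- Under the hypotheses of the previous statement (recursion with parameter N, μ_1 < μ_2), one has π(X_2 > N) ≤ ∑_{n > N} (μ_1/μ_2)^n, and consequently, for any family (π^N) of such distributions indexed by N, lim_{N→∞} π^N(X_2 ≤ N) = 1 and lim_{N→∞} π^N(X_2 = 0) = 1 - μ_1/μ_2. -/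
open Finset Filter

set_option maxHeartbeats 1000000 in
/-- For a family `p N` of probability distributions on `ℕ²` satisfying the saturated balance
recursion with parameter `N` (and `μ₁ < μ₂`): the tail bound
`π^N(X₂ > N) ≤ ∑_{n > N} (μ₁/μ₂)ⁿ` holds, `π^N(X₂ ≤ N) → 1`, and
`π^N(X₂ = 0) → 1 - μ₁/μ₂`. -/
theorem stmt_19 (mu1 mu2 : ℝ) (hmu1 : 0 < mu1) (hmu : mu1 < mu2)
    (p : ℕ → ℕ × ℕ → ℝ) (hnn : ∀ N x, 0 ≤ p N x)
    (hsum : ∀ N, Summable (p N)) (htotal : ∀ N, ∑' x : ℕ × ℕ, p N x = 1)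
    (hrec : ∀ N n : ℕ, (∑' i : ℕ, p N (i, n + 1)) =
      (mu1 / mu2) * ((∑' i : ℕ, p N (i, n)) - if N ≤ n then p N (0, n) else 0)) :
    (∀ N : ℕ, 1 - (∑ n ∈ range (N + 1), ∑' i : ℕ, p N (i, n)) ≤
      ∑' k : ℕ, (mu1 / mu2) ^ (N + 1 + k)) ∧
    Tendsto (fun N => ∑ n ∈ range (N + 1), ∑' i : ℕ, p N (i, n)) atTop (nhds 1) ∧
    Tendsto (fun N => ∑' i : ℕ, p N (i, 0)) atTop (nhds (1 - mu1 / mu2)) := by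
  set r := mu1 / mu2 with hrdef
  have hmu2 : 0 < mu2 := hmu1.trans hmu
  have hr0 : 0 < r := div_pos hmu1 hmu2
  have hr1 : r < 1 := (div_lt_one hmu2).mpr hmu
  have hqnn : ∀ N n, 0 ≤ ∑' i : ℕ, p N (i, n) := fun N n => tsum_nonneg fun i => hnn N _
  -- summability of the marginal and total mass 1
  have hswap : ∀ N, Summable (fun x : ℕ × ℕ => p N (x.2, x.1)) := fun N =>
    (Equiv.prodComm ℕ ℕ).summable_iff.mpr (hsum N)
  have hqs : ∀ N, Summable (fun n => ∑' i : ℕ, p N (i, n)) := fun N =>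
    ((summable_prod_of_nonneg (fun x => hnn N _)).mp (hswap N)).2
  have hq1 : ∀ N, ∑' n : ℕ, ∑' i : ℕ, p N (i, n) = 1 := by
    intro N
    have h1 : ∑' x : ℕ × ℕ, p N (x.2, x.1) = ∑' n : ℕ, ∑' i : ℕ, p N (i, n) :=
      Summable.tsum_prod' (hswap N) fun n => ((summable_prod_of_nonneg (fun x => hnn N _)).mp (hswap N)).1 n
    have h2 : ∑' x : ℕ × ℕ, p N (x.2, x.1) = ∑' x : ℕ × ℕ, p N x :=
      (Equiv.prodComm ℕ ℕ).tsum_eq (p N)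
    rw [← h1, h2, htotal N]
  -- geometric bound on the marginal
  have hqle : ∀ N n, (∑' i : ℕ, p N (i, n)) ≤ r ^ n := by
    intro N n
    induction n with
    | zero =>
      have := Summable.le_tsum (hqs N) 0 (fun j _ => hqnn N j)
      simpa [hq1 N] using this
    | succ n ih =>
      have hc : 0 ≤ (if N ≤ n then p N (0, n) else 0) := by
        by_cases h : N ≤ n <;> simp [h, hnn N _]
      rw [hrec N n]
      have h1 : r * ((∑' i : ℕ, p N (i, n)) - (if N ≤ n then p N (0, n) else 0)) ≤
          r * (∑' i : ℕ, p N (i, n)) := by nlinarith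
      have h2 : r * (∑' i : ℕ, p N (i, n)) ≤ r * r ^ n := by nlinarith
      calc r * ((∑' i : ℕ, p N (i, n)) - (if N ≤ n then p N (0, n) else 0))
          ≤ r * r ^ n := h1.trans h2
        _ = r ^ (n + 1) := by ring
  have hgeoS : ∀ N : ℕ, Summable (fun k : ℕ => r ^ (N + 1 + k)) := by
    intro N
    simp only [pow_add]
    exact (summable_geometric_of_lt_one hr0.le hr1).mul_left _
  have htail : ∀ N : ℕ, 1 - (∑ n ∈ range (N + 1), ∑' i : ℕ, p N (i, n)) =
      ∑' k : ℕ, ∑' i : ℕ, p N (i, k + (N + 1)) := by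
    intro N
    have := Summable.sum_add_tsum_nat_add (f := fun n => ∑' i : ℕ, p N (i, n)) (N + 1) (hqs N)
    rw [hq1 N] at this
    linarith
  have hfirst : ∀ N : ℕ, 1 - (∑ n ∈ range (N + 1), ∑' i : ℕ, p N (i, n)) ≤
      ∑' k : ℕ, r ^ (N + 1 + k) := by
    intro N
    rw [htail N]
    refine Summable.tsum_le_tsum (fun k => ?_) ((summable_nat_add_iff (N + 1)).mpr (hqs N)) (hgeoS N)
    have := hqle N (k + (N + 1))
    calc (∑' i : ℕ, p N (i, k + (N + 1))) ≤ r ^ (k + (N + 1)) := this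
      _ = r ^ (N + 1 + k) := by rw [add_comm]
  have hgeoval : ∀ N : ℕ, ∑' k : ℕ, r ^ (N + 1 + k) = r ^ (N + 1) / (1 - r) := by
    intro N
    simp only [pow_add]
    rw [tsum_mul_left, tsum_geometric_of_lt_one hr0.le hr1, div_eq_mul_inv]
  have hSle1 : ∀ N : ℕ, (∑ n ∈ range (N + 1), ∑' i : ℕ, p N (i, n)) ≤ 1 := by
    intro N
    have := Summable.sum_le_tsum (range (N + 1)) (fun n _ => hqnn N n) (hqs N)
    simpa [hq1 N] using this
  have hpow : Tendsto (fun N : ℕ => r ^ (N + 1)) atTop (nhds 0) :=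
    (tendsto_pow_atTop_nhds_zero_of_lt_one hr0.le hr1).comp (tendsto_add_atTop_nat 1)
  have hS : Tendsto (fun N => ∑ n ∈ range (N + 1), ∑' i : ℕ, p N (i, n)) atTop (nhds 1) := by
    have h0 : Tendsto (fun N : ℕ => r ^ (N + 1) / (1 - r)) atTop (nhds 0) := by
      simpa using hpow.div_const (1 - r)
    have hlow : Tendsto (fun N : ℕ => 1 - r ^ (N + 1) / (1 - r)) atTop (nhds 1) := by
      simpa using tendsto_const_nhds.sub h0
    refine tendsto_of_tendsto_of_tendsto_of_le_of_le hlow tendsto_const_nhds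
      (fun N => ?_) (fun N => hSle1 N)
    have := (hfirst N).trans_eq (hgeoval N)
    linarith
  refine ⟨hfirst, hS, ?_⟩
  -- linear recursion below N gives the closed form
  have hlin : ∀ N n : ℕ, n ≤ N → (∑' i : ℕ, p N (i, n)) = r ^ n * ∑' i : ℕ, p N (i, 0) := by
    intro N n
    induction n with
    | zero => intro _; simp
    | succ n ih =>
      intro h
      have hn : ¬ N ≤ n := by omega
      rw [hrec N n, if_neg hn, ih (by omega)]
      ring
  have hq0 : ∀ N : ℕ, (∑' i : ℕ, p N (i, 0)) =
      (∑ n ∈ range (N + 1), ∑' i : ℕ, p N (i, n)) * ((1 - r) / (1 - r ^ (N + 1))) := by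
    intro N
    have hne1 : r ≠ 1 := hr1.ne
    have hp1 : r ^ (N + 1) < 1 := pow_lt_one₀ hr0.le hr1 (Nat.succ_ne_zero N)
    have hne2 : (1 : ℝ) - r ^ (N + 1) ≠ 0 := by linarith
    have hSform : (∑ n ∈ range (N + 1), ∑' i : ℕ, p N (i, n)) =
        (∑ n ∈ range (N + 1), r ^ n) * ∑' i : ℕ, p N (i, 0) := by
      rw [sum_mul]
      exact Finset.sum_congr rfl fun n hn => hlin N n (by simpa using Nat.lt_succ_iff.mp (mem_range.mp hn))
    rw [hSform, geom_sum_eq hne1]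
    have hne3 : r - 1 ≠ 0 := sub_ne_zero.mpr hne1
    field_simp
    ring
  have hden : Tendsto (fun N : ℕ => (1 - r) / (1 - r ^ (N + 1))) atTop
      (nhds ((1 - r) / (1 - 0))) :=
    tendsto_const_nhds.div (tendsto_const_nhds.sub hpow) (by norm_num)
  have hfinal := hS.mul hden
  have hval : (1 : ℝ) * ((1 - r) / (1 - 0)) = 1 - r := by norm_num
  rw [hval] at hfinal
  exact Tendsto.congr (fun N => (hq0 N).symm) hfinal
end
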